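/- Let α > 1 and let A, B, a, b be positive integers such that A ≤ α·B and B ≤ α·A. Then A·c_α·log₂ a + B·c_α·log₂ b + A + B ≤ (A + B)·c_α·log₂(a + b). -/

import Mathlib

/-! With `h = H(α/(α+1))` the binary entropy in nats, `c_α = log 2 / h`, so after multiplying
by `h` the claim reads `(A+B)·h ≤ A·log((a+b)/a) + B·log((a+b)/b)`. The right side is a cross
entropy, which dominates the entropy `(A+B)·H(A/(A+B))` (the log-sum inequality), and the
hypotheses place `A/(A+B)` in `[1/(α+1), α/(α+1)]`, on which the concave, symmetric function
`H` is smallest at the endpoints. -/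

open Real

/-- The constant `c_α = (α+1)/((α+1)·log₂(α+1) − α·log₂ α)`. -/
noncomputable def cA (α : ℝ) : ℝ :=
  (α + 1) / ((α + 1) * logb 2 (α + 1) - α * logb 2 α)

namespace Real

theorem mul_log_div_add_mul_log_div_le {x y a b : ℝ} (hx : 0 < x) (hy : 0 < y)
    (ha : 0 < a) (hb : 0 < b) :
    x * log (a / x) + y * log (b / y) ≤ (x + y) * log ((a + b) / (x + y)) := by
  have hxy : 0 < x + y := add_pos hx hy
  have hconc := strictConcaveOn_log_Ioi.concaveOn.2 (div_pos ha hx) (div_pos hb hy)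
    (div_pos hx hxy).le (div_pos hy hxy).le (by field_simp)
  have hmean : (x / (x + y)) • (a / x) + (y / (x + y)) • (b / y) = (a + b) / (x + y) := by
    simp only [smul_eq_mul]
    field_simp
  rw [hmean, smul_eq_mul, smul_eq_mul] at hconc
  have hscaled := mul_le_mul_of_nonneg_left hconc hxy.le
  field_simp at hscaled
  linarith

theorem mul_binEntropy_div_add_le {x y a b : ℝ} (hx : 0 < x) (hy : 0 < y)
    (ha : 0 < a) (hb : 0 < b) :
    (x + y) * binEntropy (x / (x + y))
      ≤ x * (log (a + b) - log a) + y * (log (a + b) - log b) := by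
  have hxy : 0 < x + y := add_pos hx hy
  have hlogsum := mul_log_div_add_mul_log_div_le hx hy ha hb
  have hsub : 1 - x / (x + y) = y / (x + y) := by field_simp; ring
  rw [binEntropy, hsub, inv_div, inv_div, log_div hxy.ne' hx.ne', log_div hxy.ne' hy.ne']
  rw [log_div ha.ne' hx.ne', log_div hb.ne' hy.ne', log_div (add_pos ha hb).ne' hxy.ne'] at hlogsum
  field_simp
  linarith

theorem binEntropy_le_of_mem_Icc {p q : ℝ} (hq : q ≤ 1) (hp : p ∈ Set.Icc (1 - q) q) :
    binEntropy q ≤ binEntropy p := by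
  obtain ⟨hpl, hpu⟩ := hp
  have hconc := strictConcave_binEntropy.concaveOn.ge_on_segment
    (⟨by linarith, by linarith⟩ : 1 - q ∈ Set.Icc 0 1) (⟨by linarith, hq⟩ : q ∈ Set.Icc 0 1)
    (z := p) (by rw [segment_eq_Icc (by linarith)]; exact ⟨hpl, hpu⟩)
  rwa [binEntropy_one_sub, min_self] at hconc

theorem binEntropy_div_add_one_le_binEntropy_div_add {α x y : ℝ} (hx : 0 < x) (hy : 0 < y)
    (hxy : x ≤ α * y) (hyx : y ≤ α * x) :
    binEntropy (α / (α + 1)) ≤ binEntropy (x / (x + y)) := by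
  have hα : 0 < α := pos_of_mul_pos_left (hx.trans_le hxy) hy.le
  refine binEntropy_le_of_mem_Icc ((div_le_one (by linarith)).2 (by linarith)) ⟨?_, ?_⟩
  · rw [show 1 - α / (α + 1) = 1 / (α + 1) by field_simp; ring,
      div_le_div_iff₀ (by linarith) (by linarith)]
    linarith
  · rw [div_le_div_iff₀ (by linarith) (by linarith)]
    linarith

end Real

theorem cA_eq_log_two_div_binEntropy {α : ℝ} (hα : 0 < α) :
    cA α = log 2 / binEntropy (α / (α + 1)) := by
  have hα1 : 0 < α + 1 := by linarith
  have hsub : 1 - α / (α + 1) = 1 / (α + 1) := by field_simp; ring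
  rw [cA, binEntropy, hsub, inv_div, inv_div, log_div hα1.ne' hα.ne', div_one, logb, logb]
  field_simp
  ring

theorem alphamerge_A (α : ℝ) (hα : 1 < α) (A B a b : ℕ)
    (hA : 0 < A) (hB : 0 < B) (ha : 0 < a) (hb : 0 < b)
    (h1 : (A : ℝ) ≤ α * B) (h2 : (B : ℝ) ≤ α * A) :
    (A : ℝ) * cA α * logb 2 a + (B : ℝ) * cA α * logb 2 b + A + B
      ≤ ((A : ℝ) + B) * cA α * logb 2 ((a : ℝ) + b) := by
  have hα0 : 0 < α := by linarith
  have hA' : (0 : ℝ) < A := by exact_mod_cast hA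
  have hB' : (0 : ℝ) < B := by exact_mod_cast hB
  set h := binEntropy (α / (α + 1))
  have h_pos : 0 < h :=
    binEntropy_pos (by positivity) ((div_lt_one (by linarith)).2 (by linarith))
  have hentropy_le : ((A : ℝ) + B) * h
      ≤ A * (log ((a : ℝ) + b) - log a) + B * (log ((a : ℝ) + b) - log b) :=
    (mul_le_mul_of_nonneg_left (binEntropy_div_add_one_le_binEntropy_div_add hA' hB' h1 h2)
      (by positivity)).trans
      (mul_binEntropy_div_add_le hA' hB' (by exact_mod_cast ha) (by exact_mod_cast hb))
  rw [cA_eq_log_two_div_binEntropy hα0, logb, logb, logb, ← sub_nonneg]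
  have hdiff : ((A : ℝ) + B) * (log 2 / h) * (log ((a : ℝ) + b) / log 2)
      - ((A : ℝ) * (log 2 / h) * (log a / log 2) + B * (log 2 / h) * (log b / log 2) + A + B)
      = (A * (log ((a : ℝ) + b) - log a) + B * (log ((a : ℝ) + b) - log b)
          - ((A : ℝ) + B) * h) / h := by
    field_simp
    ring
  rw [hdiff]
  exact div_nonneg (by linarith) h_pos.le
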